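/- Let n be a positive natural number, 0 < μ ≤ ε, ξ > 0, and T > 0. Let φ : ℝ → ℝ be nonnegative, Lipschitz continuous with constant L_φ, and satisfy φ(x) ≤ a₀ + a₁x for all x ∈ ℝ; let A₀ ∈ L²(ℝⁿ) ∩ L^∞(ℝⁿ). For v ∈ L²(ℝⁿ) and t ∈ [0,T] define P(v)(x,t) = A₀(x) · exp( t · (∫_{ℝⁿ} φ(v(y)) Γ_μ(x,y) dy) / (∫_{ℝⁿ} φ(v(y)) Γ_ε(x,y) dy + ξ) ). Then there exists a constant κ₃ > 0, depending only on n, μ, ε, ξ, T, L_φ, and ‖A₀‖_{L²(ℝⁿ)}, such that for all v₁, v₂ ∈ L²(ℝⁿ) and all t ∈ [0,T], ‖P(v₁)(·,t) − P(v₂)(·,t)‖_{L²(ℝⁿ)} ≤ t · κ₃ · ‖v₁ − v₂‖_{L²(ℝⁿ)}. -/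

import Mathlib

/-!
For fixed `x` the exponent of `P(v)(x,t)` is a ratio `b/(c + ξ)` of two Gaussian averages of
`φ ∘ v`. Since `μ ≤ ε`, `Γ_μ ≤ (ε/μ)ⁿ Γ_ε` pointwise, so `b ≤ (ε/μ)ⁿ c` and the exponent lies in
`[0, T (ε/μ)ⁿ]`, where `exp` is Lipschitz with constant `exp (T (ε/μ)ⁿ)`. By Cauchy–Schwarz each
average moves by at most `L_φ ‖Γ_ν(0,·)‖₂ ‖v₁ - v₂‖₂`, uniformly in `x`, and the denominators are
at least `ξ`; so `|P(v₁) - P(v₂)|(x) ≤ t κ ‖v₁ - v₂‖₂ |A₀ x|` with `κ` independent of `x`, `t`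
and `vᵢ`, and taking `L²` norms in `x` ends the proof.
-/

open Real MeasureTheory
open scoped NNReal

/-- The Gaussian kernel `Γ_ν(x,y) = (2πν²)^{-n/2} · exp(−‖x−y‖₂²/(2ν²))` on `ℝⁿ`. -/
noncomputable def gaussK (n : ℕ) (ν : ℝ) (x y : EuclideanSpace ℝ (Fin n)) : ℝ :=
  (2 * π * ν ^ 2) ^ (-(n : ℝ) / 2) * Real.exp (-‖x - y‖ ^ 2 / (2 * ν ^ 2))

lemma abs_exp_sub_exp_le_of_le {a b M : ℝ} (ha : a ≤ M) (hb : b ≤ M) :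
    |exp a - exp b| ≤ exp M * |a - b| := by
  wlog hba : b ≤ a generalizing a b
  · rw [abs_sub_comm, abs_sub_comm a]
    exact this hb ha (le_of_not_ge hba)
  have hsub : exp a - exp b ≤ exp a * (a - b) := by
    have hb' : exp b = exp a * exp (b - a) := by rw [← exp_add]; ring_nf
    nlinarith [exp_pos a, add_one_le_exp (b - a)]
  rw [abs_of_nonneg (sub_nonneg.2 (exp_le_exp.2 hba)), abs_of_nonneg (sub_nonneg.2 hba)]
  exact hsub.trans (mul_le_mul_of_nonneg_right (exp_le_exp.2 ha) (sub_nonneg.2 hba))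

lemma abs_div_add_sub_div_add_le {b₁ b₂ c₁ c₂ ξ R : ℝ} (hξ : 0 < ξ) (hc₁ : 0 ≤ c₁)
    (hc₂ : 0 ≤ c₂) (hb₂ : 0 ≤ b₂) (hb₂R : b₂ ≤ R * (c₂ + ξ)) :
    |b₁ / (c₁ + ξ) - b₂ / (c₂ + ξ)| ≤ (|b₁ - b₂| + R * |c₁ - c₂|) / ξ := by
  have hd₁ : 0 < c₁ + ξ := by linarith
  have hd₂ : 0 < c₂ + ξ := by linarith
  have hratio : |b₂ / (c₂ + ξ)| ≤ R := by
    rw [abs_of_nonneg (by positivity), div_le_iff₀ hd₂]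
    exact hb₂R
  have hident : b₁ / (c₁ + ξ) - b₂ / (c₂ + ξ)
      = ((b₁ - b₂) + b₂ / (c₂ + ξ) * (c₂ - c₁)) / (c₁ + ξ) := by
    field_simp
    ring
  have hnum : |(b₁ - b₂) + b₂ / (c₂ + ξ) * (c₂ - c₁)| ≤ |b₁ - b₂| + R * |c₁ - c₂| := by
    refine (abs_add_le _ _).trans (add_le_add_right ?_ _)
    rw [abs_mul, abs_sub_comm c₂]
    exact mul_le_mul_of_nonneg_right hratio (abs_nonneg _)
  rw [hident, abs_div, abs_of_pos hd₁]
  exact div_le_div₀ ((abs_nonneg _).trans hnum) hnum hξ (by linarith)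

section LipschitzKernel

variable {α : Type*} [MeasurableSpace α] {m : Measure α}

lemma integral_abs_mul_le_eLpNorm_two_mul {f g : α → ℝ} (hf : MemLp f 2 m) (hg : MemLp g 2 m) :
    ∫ y, |f y * g y| ∂m ≤ (eLpNorm f 2 m).toReal * (eLpNorm g 2 m).toReal := by
  -- elaborated without the expected type, which otherwise sends unification on a long detour
  have hHolder : eLpNorm (f * g) 1 m ≤ eLpNorm f 2 m * eLpNorm g 2 m :=
    (eLpNorm_smul_le_mul_eLpNorm (p := 2) (q := 2) (r := 1) hg.1 hf.1 :)
  have hL1 : ∫ y, |f y * g y| ∂m = (eLpNorm (f * g) 1 m).toReal := by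
    simp only [← Real.norm_eq_abs, eLpNorm_one_eq_lintegral_enorm]
    exact integral_norm_eq_lintegral_enorm (hf.1.mul hg.1)
  rw [hL1, ← ENNReal.toReal_mul]
  exact ENNReal.toReal_mono (ENNReal.mul_ne_top hf.eLpNorm_ne_top hg.eLpNorm_ne_top) hHolder

variable {φ : ℝ → ℝ} {K : ℝ≥0} {k : α → ℝ}

lemma LipschitzWith.integrable_comp_mul (hφ : LipschitzWith K φ) {v : α → ℝ} (hv : MemLp v 2 m)
    (hk : Integrable k m) (hk₂ : MemLp k 2 m) : Integrable (fun y => φ (v y) * k y) m := by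
  have hvk : Integrable (fun y => v y * k y) m := hv.integrable_mul hk₂
  refine ((hk.norm.const_mul |φ 0|).add (hvk.norm.const_mul K)).mono'
    ((hφ.continuous.comp_aestronglyMeasurable hv.1).mul hk.1) (ae_of_all _ fun y => ?_)
  have hφv : |φ (v y)| ≤ |φ 0| + K * |v y| := by
    have := hφ.norm_sub_le (v y) 0
    simp only [Real.norm_eq_abs, sub_zero] at this
    linarith [abs_sub_abs_le_abs_sub (φ (v y)) (φ 0)]
  simp only [Pi.add_apply, Real.norm_eq_abs, abs_mul]
  nlinarith [abs_nonneg (k y)]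

lemma LipschitzWith.abs_integral_comp_mul_sub_le (hφ : LipschitzWith K φ) {v₁ v₂ : α → ℝ}
    (hv₁ : MemLp v₁ 2 m) (hv₂ : MemLp v₂ 2 m) (hk : Integrable k m) (hk₂ : MemLp k 2 m) :
    |(∫ y, φ (v₁ y) * k y ∂m) - ∫ y, φ (v₂ y) * k y ∂m|
      ≤ K * (eLpNorm (v₁ - v₂) 2 m).toReal * (eLpNorm k 2 m).toReal := by
  rw [← integral_sub (hφ.integrable_comp_mul hv₁ hk hk₂) (hφ.integrable_comp_mul hv₂ hk hk₂)]
  calc |∫ y, φ (v₁ y) * k y - φ (v₂ y) * k y ∂m|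
      ≤ ∫ y, K * |(v₁ - v₂) y * k y| ∂m := by
        refine abs_integral_le_integral_abs.trans (integral_mono_of_nonneg
          (ae_of_all _ fun y => abs_nonneg _) ?_ (ae_of_all _ fun y => ?_))
        · exact ((hv₁.sub hv₂).integrable_mul hk₂).abs.const_mul _
        · simp only [Pi.sub_apply, ← sub_mul, abs_mul, ← mul_assoc]
          exact mul_le_mul_of_nonneg_right
            (by simpa [Real.dist_eq] using hφ.dist_le_mul (v₁ y) (v₂ y)) (abs_nonneg _)
    _ ≤ K * (eLpNorm (v₁ - v₂) 2 m).toReal * (eLpNorm k 2 m).toReal := by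
        rw [integral_const_mul, mul_assoc]
        exact mul_le_mul_of_nonneg_left
          (integral_abs_mul_le_eLpNorm_two_mul (hv₁.sub hv₂) hk₂) K.2

end LipschitzKernel

lemma integrable_exp_neg_mul_sq_norm {V : Type*} [NormedAddCommGroup V] [InnerProductSpace ℝ V]
    [FiniteDimensional ℝ V] [MeasurableSpace V] [BorelSpace V] {b : ℝ} (hb : 0 < b) :
    Integrable (fun v : V => exp (-b * ‖v‖ ^ 2)) := by
  refine (GaussianFourier.integrable_cexp_neg_mul_sq_norm_add (V := V) (b := b)
    (by simpa using hb) 0 0).norm.congr (ae_of_all _ fun v => ?_)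
  simp [Complex.norm_exp, ← Complex.ofReal_pow]

section GaussianKernel

variable {n : ℕ} {ν : ℝ}

lemma gaussK_nonneg (x y : EuclideanSpace ℝ (Fin n)) : 0 ≤ gaussK n ν x y := by
  unfold gaussK
  positivity

lemma gaussK_le (x y : EuclideanSpace ℝ (Fin n)) :
    gaussK n ν x y ≤ (2 * π * ν ^ 2) ^ (-(n : ℝ) / 2) := by
  unfold gaussK
  refine mul_le_of_le_one_right (by positivity) (exp_le_one_iff.2 ?_)
  exact div_nonpos_of_nonpos_of_nonneg (neg_nonpos.2 (by positivity)) (by positivity)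

lemma gaussK_apply_eq_gaussK_zero (x y : EuclideanSpace ℝ (Fin n)) :
    gaussK n ν x y = gaussK n ν 0 (y - x) := by
  simp only [gaussK, zero_sub, norm_neg, norm_sub_rev]

lemma integrable_gaussK (hν : 0 < ν) (x : EuclideanSpace ℝ (Fin n)) :
    Integrable (gaussK n ν x) := by
  have h₀ : Integrable (gaussK n ν 0) := by
    have hb : 0 < 1 / (2 * ν ^ 2) := by positivity
    refine ((integrable_exp_neg_mul_sq_norm hb).const_mul
      ((2 * π * ν ^ 2) ^ (-(n : ℝ) / 2))).congr (ae_of_all _ fun y => ?_)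
    simp only [gaussK, zero_sub, norm_neg]
    ring_nf
  simpa only [← gaussK_apply_eq_gaussK_zero] using h₀.comp_sub_right x

lemma memLp_two_gaussK (hν : 0 < ν) (x : EuclideanSpace ℝ (Fin n)) :
    MemLp (gaussK n ν x) 2 := by
  have hint := integrable_gaussK hν x
  refine (memLp_two_iff_integrable_sq hint.1).2 <|
    (hint.const_mul ((2 * π * ν ^ 2) ^ (-(n : ℝ) / 2))).mono' (hint.1.pow 2)
      (ae_of_all _ fun y => ?_)
  rw [Real.norm_eq_abs, abs_pow, abs_of_nonneg (gaussK_nonneg x y), sq]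
  exact mul_le_mul_of_nonneg_right (gaussK_le x y) (gaussK_nonneg x y)

lemma eLpNorm_gaussK (x : EuclideanSpace ℝ (Fin n)) :
    eLpNorm (gaussK n ν x) 2 volume = eLpNorm (gaussK n ν 0) 2 volume := by
  have hcont : Continuous (gaussK n ν 0) := by
    unfold gaussK
    fun_prop
  simpa only [Function.comp_def, ← gaussK_apply_eq_gaussK_zero] using
    eLpNorm_comp_measurePreserving (p := 2) hcont.aestronglyMeasurable
      (measurePreserving_sub_right volume x)

lemma gaussK_le_mul_gaussK {μ ε : ℝ} (hμ : 0 < μ) (hμε : μ ≤ ε)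
    (x y : EuclideanSpace ℝ (Fin n)) :
    gaussK n μ x y ≤ (ε / μ) ^ n * gaussK n ε x y := by
  have hε : 0 < ε := hμ.trans_le hμε
  have hcoeff : ∀ ν : ℝ, 0 < ν →
      (2 * π * ν ^ 2) ^ (-(n : ℝ) / 2) = (2 * π) ^ (-(n : ℝ) / 2) * (ν ^ n)⁻¹ := by
    intro ν hν
    rw [mul_rpow (by positivity) (by positivity), ← rpow_natCast ν 2, ← rpow_mul hν.le,
      ← rpow_natCast, ← rpow_neg hν.le]
    congr 2
    push_cast
    ring
  have hscale : (ε / μ) ^ n * (ε ^ n)⁻¹ = (μ ^ n)⁻¹ := by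
    rw [div_pow]
    field_simp
  unfold gaussK
  rw [hcoeff μ hμ, hcoeff ε hε, ← mul_assoc, mul_left_comm _ ((2 * π) ^ (-(n : ℝ) / 2)),
    hscale]
  refine mul_le_mul_of_nonneg_left (exp_le_exp.2 ?_) (by positivity)
  rw [neg_div, neg_div, neg_le_neg_iff]
  gcongr

end GaussianKernel

/-- The exponent of the productivity operator: `P(v)(x,t) = A₀(x) · exp (t · _)`. -/
noncomputable def productivityExponent (n : ℕ) (μ ε ξ : ℝ) (φ : ℝ → ℝ)
    (v : EuclideanSpace ℝ (Fin n) → ℝ) (x : EuclideanSpace ℝ (Fin n)) : ℝ :=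
  (∫ y, φ (v y) * gaussK n μ x y) / ((∫ y, φ (v y) * gaussK n ε x y) + ξ)

section ProductivityExponent

variable {n : ℕ} {μ ε ξ : ℝ} {φ : ℝ → ℝ} {K : ℝ≥0} {v v₁ v₂ : EuclideanSpace ℝ (Fin n) → ℝ}

lemma integral_comp_mul_gaussK_le (hμ : 0 < μ) (hμε : μ ≤ ε) (hφ0 : ∀ z, 0 ≤ φ z)
    (hφ : LipschitzWith K φ) (hv : MemLp v 2) (x : EuclideanSpace ℝ (Fin n)) :
    ∫ y, φ (v y) * gaussK n μ x y ≤ (ε / μ) ^ n * ∫ y, φ (v y) * gaussK n ε x y := by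
  have hε : 0 < ε := hμ.trans_le hμε
  rw [← integral_const_mul]
  refine integral_mono
    (hφ.integrable_comp_mul hv (integrable_gaussK hμ x) (memLp_two_gaussK hμ x))
    ((hφ.integrable_comp_mul hv (integrable_gaussK hε x) (memLp_two_gaussK hε x)).const_mul _)
    fun y => ?_
  rw [mul_left_comm]
  exact mul_le_mul_of_nonneg_left (gaussK_le_mul_gaussK hμ hμε x y) (hφ0 _)

lemma productivityExponent_nonneg (hξ : 0 < ξ) (hφ0 : ∀ z, 0 ≤ φ z)
    (x : EuclideanSpace ℝ (Fin n)) : 0 ≤ productivityExponent n μ ε ξ φ v x := by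
  have hint : ∀ ν, 0 ≤ ∫ y, φ (v y) * gaussK n ν x y :=
    fun ν => integral_nonneg fun y => mul_nonneg (hφ0 _) (gaussK_nonneg x y)
  exact div_nonneg (hint μ) (add_nonneg (hint ε) hξ.le)

lemma productivityExponent_le (hμ : 0 < μ) (hμε : μ ≤ ε) (hξ : 0 < ξ) (hφ0 : ∀ z, 0 ≤ φ z)
    (hφ : LipschitzWith K φ) (hv : MemLp v 2) (x : EuclideanSpace ℝ (Fin n)) :
    productivityExponent n μ ε ξ φ v x ≤ (ε / μ) ^ n := by
  have hc : 0 ≤ ∫ y, φ (v y) * gaussK n ε x y :=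
    integral_nonneg fun y => mul_nonneg (hφ0 _) (gaussK_nonneg x y)
  have hR : 0 ≤ (ε / μ) ^ n := pow_nonneg (div_nonneg (hμ.le.trans hμε) hμ.le) n
  rw [productivityExponent, div_le_iff₀ (by linarith)]
  nlinarith [integral_comp_mul_gaussK_le hμ hμε hφ0 hφ hv x]

lemma abs_productivityExponent_sub_le (hμ : 0 < μ) (hμε : μ ≤ ε) (hξ : 0 < ξ)
    (hφ0 : ∀ z, 0 ≤ φ z) (hφ : LipschitzWith K φ) (hv₁ : MemLp v₁ 2) (hv₂ : MemLp v₂ 2)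
    (x : EuclideanSpace ℝ (Fin n)) :
    |productivityExponent n μ ε ξ φ v₁ x - productivityExponent n μ ε ξ φ v₂ x|
      ≤ K * ((eLpNorm (gaussK n μ 0) 2 volume).toReal
          + (ε / μ) ^ n * (eLpNorm (gaussK n ε 0) 2 volume).toReal) / ξ
        * (eLpNorm (v₁ - v₂) 2 volume).toReal := by
  have hε : 0 < ε := hμ.trans_le hμε
  have hR : 0 ≤ (ε / μ) ^ n := pow_nonneg (div_nonneg hε.le hμ.le) n
  have hint : ∀ ν, ∀ w : EuclideanSpace ℝ (Fin n) → ℝ, 0 ≤ ∫ y, φ (w y) * gaussK n ν x y :=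
    fun ν w => integral_nonneg fun y => mul_nonneg (hφ0 _) (gaussK_nonneg x y)
  have hdiff : ∀ ν, 0 < ν →
      |(∫ y, φ (v₁ y) * gaussK n ν x y) - ∫ y, φ (v₂ y) * gaussK n ν x y|
        ≤ K * (eLpNorm (v₁ - v₂) 2 volume).toReal * (eLpNorm (gaussK n ν 0) 2 volume).toReal := by
    intro ν hν
    rw [← eLpNorm_gaussK x]
    exact hφ.abs_integral_comp_mul_sub_le hv₁ hv₂ (integrable_gaussK hν x)
      (memLp_two_gaussK hν x)
  refine (abs_div_add_sub_div_add_le (R := (ε / μ) ^ n) hξ (hint ε v₁) (hint ε v₂) (hint μ v₂)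
    ?_).trans ?_
  · nlinarith [integral_comp_mul_gaussK_le hμ hμε hφ0 hφ hv₂ x]
  · rw [div_mul_eq_mul_div]
    refine div_le_div_of_nonneg_right ?_ hξ.le
    nlinarith [hdiff μ hμ, hdiff ε hε]

lemma abs_exp_mul_productivityExponent_sub_le {t T : ℝ} (ht : 0 ≤ t) (htT : t ≤ T)
    (hμ : 0 < μ) (hμε : μ ≤ ε) (hξ : 0 < ξ) (hφ0 : ∀ z, 0 ≤ φ z) (hφ : LipschitzWith K φ)
    (hv₁ : MemLp v₁ 2) (hv₂ : MemLp v₂ 2) (x : EuclideanSpace ℝ (Fin n)) :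
    |exp (t * productivityExponent n μ ε ξ φ v₁ x) - exp (t * productivityExponent n μ ε ξ φ v₂ x)|
      ≤ t * (exp (T * (ε / μ) ^ n) * (K * ((eLpNorm (gaussK n μ 0) 2 volume).toReal
          + (ε / μ) ^ n * (eLpNorm (gaussK n ε 0) 2 volume).toReal) / ξ))
        * (eLpNorm (v₁ - v₂) 2 volume).toReal := by
  have hle : ∀ v, MemLp v 2 → t * productivityExponent n μ ε ξ φ v x ≤ T * (ε / μ) ^ n :=
    fun v hv => mul_le_mul htT (productivityExponent_le hμ hμε hξ hφ0 hφ hv x)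
      (productivityExponent_nonneg hξ hφ0 x) (ht.trans htT)
  have hexp := abs_exp_sub_exp_le_of_le (hle v₁ hv₁) (hle v₂ hv₂)
  rw [← mul_sub, abs_mul, abs_of_nonneg ht] at hexp
  have hdiff := abs_productivityExponent_sub_le hμ hμε hξ hφ0 hφ hv₁ hv₂ x
  calc _ ≤ exp (T * (ε / μ) ^ n) * (t * |_|) := hexp
    _ ≤ exp (T * (ε / μ) ^ n) * (t * (_ * (eLpNorm (v₁ - v₂) 2 volume).toReal)) := by gcongr
    _ = _ := by ring

end ProductivityExponent

theorem productivity_operator_lipschitz_general (n : ℕ)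
    (μ ε ξ T : ℝ) (hμ : 0 < μ) (hμε : μ ≤ ε) (hξ : 0 < ξ)
    (φ : ℝ → ℝ) (hφ0 : ∀ x, 0 ≤ φ x)
    (Lφ : ℝ) (hLφ : 0 ≤ Lφ) (hφlip : ∀ x y, |φ x - φ y| ≤ Lφ * |x - y|)
    (A₀ : EuclideanSpace ℝ (Fin n) → ℝ)
    (hA2 : MemLp A₀ 2 (volume : Measure (EuclideanSpace ℝ (Fin n)))) :
    ∃ κ₃ : ℝ, 0 < κ₃ ∧
      ∀ (v₁ v₂ : EuclideanSpace ℝ (Fin n) → ℝ), MemLp v₁ 2 → MemLp v₂ 2 →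
        ∀ t : ℝ, 0 ≤ t → t ≤ T →
          eLpNorm (fun x =>
              A₀ x * Real.exp (t * ((∫ y, φ (v₁ y) * gaussK n μ x y) /
                  ((∫ y, φ (v₁ y) * gaussK n ε x y) + ξ))) -
              A₀ x * Real.exp (t * ((∫ y, φ (v₂ y) * gaussK n μ x y) /
                  ((∫ y, φ (v₂ y) * gaussK n ε x y) + ξ)))) 2 volume
            ≤ ENNReal.ofReal (t * κ₃) * eLpNorm (fun x => v₁ x - v₂ x) 2 volume := by
  have hφ : LipschitzWith Lφ.toNNReal φ := .of_dist_le_mul fun a b => by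
    simpa only [Real.dist_eq, Real.coe_toNNReal Lφ hLφ] using hφlip a b
  set C := exp (T * (ε / μ) ^ n) * (Lφ.toNNReal * ((eLpNorm (gaussK n μ 0) 2 volume).toReal
    + (ε / μ) ^ n * (eLpNorm (gaussK n ε 0) 2 volume).toReal) / ξ)
  have hC : 0 ≤ C := by
    have hR : 0 ≤ (ε / μ) ^ n := pow_nonneg (div_nonneg (hμ.le.trans hμε) hμ.le) n
    positivity
  set NA := (eLpNorm A₀ 2 volume).toReal with hNA
  refine ⟨C * NA + 1, by positivity, fun v₁ v₂ hv₁ hv₂ t ht htT => ?_⟩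
  set D := (eLpNorm (v₁ - v₂) 2 volume).toReal with hD
  have hpoint : ∀ x, ‖A₀ x * exp (t * productivityExponent n μ ε ξ φ v₁ x)
      - A₀ x * exp (t * productivityExponent n μ ε ξ φ v₂ x)‖ ≤ t * C * D * ‖A₀ x‖ := by
    intro x
    rw [← mul_sub, norm_mul, mul_comm, Real.norm_eq_abs]
    exact mul_le_mul_of_nonneg_right
      (abs_exp_mul_productivityExponent_sub_le ht htT hμ hμε hξ hφ0 hφ hv₁ hv₂ x) (norm_nonneg _)
  calc _ ≤ ENNReal.ofReal (t * C * D) * eLpNorm A₀ 2 volume :=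
        eLpNorm_le_mul_eLpNorm_of_ae_le_mul (ae_of_all _ hpoint) 2
    _ = ENNReal.ofReal (t * (C * NA)) * eLpNorm (v₁ - v₂) 2 volume := by
        rw [← ENNReal.ofReal_toReal hA2.eLpNorm_ne_top, ← hNA,
          ← ENNReal.ofReal_toReal (hv₁.sub hv₂).eLpNorm_ne_top, ← hD,
          ← ENNReal.ofReal_mul (by positivity), ← ENNReal.ofReal_mul (by positivity)]
        congr 1
        ring
    _ ≤ ENNReal.ofReal (t * (C * NA + 1)) * eLpNorm (fun x => v₁ x - v₂ x) 2 volume :=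
        mul_le_mul' (ENNReal.ofReal_le_ofReal (by linarith)) le_rfl

/-- Lipschitz continuity of the endogenous productivity operator `P` in `L²`:
there is a constant `κ₃ > 0` with
`‖P(v₁)(·,t) − P(v₂)(·,t)‖_{L²} ≤ t·κ₃·‖v₁ − v₂‖_{L²}` for all `t ∈ [0,T]`. -/
theorem productivity_operator_lipschitz (n : ℕ) (hn : 0 < n)
    (μ ε ξ T : ℝ) (hμ : 0 < μ) (hμε : μ ≤ ε) (hξ : 0 < ξ) (hT : 0 < T)
    (φ : ℝ → ℝ) (hφ0 : ∀ x, 0 ≤ φ x)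
    (Lφ : ℝ) (hLφ : 0 ≤ Lφ) (hφlip : ∀ x y, |φ x - φ y| ≤ Lφ * |x - y|)
    (a₀ a₁ : ℝ) (hφlin : ∀ x, φ x ≤ a₀ + a₁ * x)
    (A₀ : EuclideanSpace ℝ (Fin n) → ℝ)
    (hA2 : MemLp A₀ 2 (volume : Measure (EuclideanSpace ℝ (Fin n))))
    (hAinf : MemLp A₀ ⊤ (volume : Measure (EuclideanSpace ℝ (Fin n)))) :
    ∃ κ₃ : ℝ, 0 < κ₃ ∧
      ∀ (v₁ v₂ : EuclideanSpace ℝ (Fin n) → ℝ), MemLp v₁ 2 → MemLp v₂ 2 →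
        ∀ t : ℝ, 0 ≤ t → t ≤ T →
          eLpNorm (fun x =>
              A₀ x * Real.exp (t * ((∫ y, φ (v₁ y) * gaussK n μ x y) /
                  ((∫ y, φ (v₁ y) * gaussK n ε x y) + ξ))) -
              A₀ x * Real.exp (t * ((∫ y, φ (v₂ y) * gaussK n μ x y) /
                  ((∫ y, φ (v₂ y) * gaussK n ε x y) + ξ)))) 2 volume
            ≤ ENNReal.ofReal (t * κ₃) * eLpNorm (fun x => v₁ x - v₂ x) 2 volume :=
  productivity_operator_lipschitz_general n μ ε ξ T hμ hμε hξ φ hφ0 Lφ hLφ hφlip A₀ hA2
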